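/- arXiv:1411.1480 — 2 statements merged into one kernel-verified Lean document; each statement's English description precedes it below -/
import Mathlib

section
/- For k ≥ t+1, the family G(k,t) is a closed intersecting family CIF(k,t), and every transversal T of G(k,t) satisfies |T ∩ X_n| = 1 for each n with 0 ≤ n ≤ t−1. -/
/-!
Write `d(n) = k - |X_n|` and say that `m` lies in the arc of `n` when `m ≡ n + r (mod t)` with
`1 ≤ r ≤ d(n)`, i.e. when a block based at `X_n` takes a point from `X_m`. For `k ≥ t` we have
`d(n) = ⌊t/2⌋` if `n ≤ ⌊(t-1)/2⌋` and `d(n) = ⌊(t-1)/2⌋` otherwise, so the arcs form a tournament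
on `ℤ/t`: for `n ≠ m` exactly one of `n`, `m` lies in the arc of the other. This makes `G(k,t)`
intersecting.

A set `C` blocking `G` that misses `X_n` contains a whole class `X_m` from the arc of `n`: otherwise
the block at `X_n` can avoid `C`. As `k > t`, two classes have more than `k` points, so if `|C| ≤ k`
this `X_m` is unique, and by asymmetry of the tournament `C` meets every class in the arc of `m`;
hence `C` contains a block and `|C| ≥ k`. So a blocking set of size `< k` meets all `t` classes,
which gives `τ(G) = t` and describes the transversals as the sets with one point per class. A set
blocking `G ∪ G^⊤` must contain a whole class (else some transversal avoids it), hence a block,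
so the `k`-sets blocking `G ∪ G^⊤` are exactly the blocks of `G`.
-/

open Finset

variable {α : Type*} {β : Type*}

/-- `C` is a blocking set of the family `F`: it meets every block of `F`. -/
def IsBlocking (F : Set (Finset α)) (C : Finset α) : Prop :=
  ∀ B ∈ F, ∃ x ∈ B, x ∈ C

/-- The transversal number `τ(F)`: the minimum size of a (finite) blocking set. -/
noncomputable def tau (F : Set (Finset α)) : ℕ :=
  sInf {n | ∃ C : Finset α, C.card = n ∧ IsBlocking F C}

/-- The family `F^⊤` of transversals, i.e. minimum-size blocking sets of `F`. -/
noncomputable def transversals (F : Set (Finset α)) : Set (Finset α) :=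
  {C | IsBlocking F C ∧ C.card = tau F}

/-- A family is intersecting if any two of its blocks meet. -/
def FamIntersecting (F : Set (Finset α)) : Prop :=
  ∀ A ∈ F, ∀ B ∈ F, ∃ x ∈ A, x ∈ B

/-- A family is `k`-uniform if all its blocks have size `k`. -/
def FamUniform (F : Set (Finset α)) (k : ℕ) : Prop :=
  ∀ B ∈ F, B.card = k

/-- `F` has a finite blocking set (τ(F) < ∞). -/
def HasBlocking (F : Set (Finset α)) : Prop :=
  ∃ C : Finset α, IsBlocking F C

/-- Maximal intersecting family of `k`-sets: uniform, τ < ∞ and `F = F^⊤`. -/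
noncomputable def MIF (F : Set (Finset α)) (k : ℕ) : Prop :=
  FamUniform F k ∧ HasBlocking F ∧ F = transversals F

/-- Closed intersecting family `CIF(k,t)`: a `k`-uniform intersecting family with
`τ(F) = t ≤ k - 1` and `F = (F ∪ F^⊤)^⊤`. -/
noncomputable def CIF (F : Set (Finset α)) (k t : ℕ) : Prop :=
  FamUniform F k ∧ FamIntersecting F ∧ tau F = t ∧ t ≤ k - 1 ∧
    F = transversals (F ∪ transversals F)

/-- The point set of a family. -/
def pts (F : Set (Finset α)) : Set α := ⋃ B ∈ F, (B : Set α)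

/-- `G ⊛ H`: all unions `A ∪ B` with `A ∈ G`, `B ∈ H` (for point-disjoint families
these are disjoint unions). -/
def star [DecidableEq α] (G H : Set (Finset α)) : Set (Finset α) :=
  {C | ∃ A ∈ G, ∃ B ∈ H, C = A ∪ B}


/-- The size of the class `X_n` in the cycle construction `G(k,t)`. -/
def sz (k t n : ℕ) : ℕ := if n ≤ (t - 1) / 2 then k - t / 2 else k - (t - 1) / 2

/-- The class `X_n` of the cycle construction: points `(n, p)` with `p < |X_n|`. -/
def cls (k t n : ℕ) : Finset (ℕ × ℕ) := {n} ×ˢ Finset.range (sz k t n)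

/-- The family `G(k,t)`: all `k`-sets consisting of a class `X_n` together with one
chosen point from each of the next `k - |X_n|` classes around the `t`-cycle. -/
def Gfam (k t : ℕ) : Set (Finset (ℕ × ℕ)) :=
  {B | ∃ n < t, ∃ g : ℕ → ℕ × ℕ,
    (∀ i, 1 ≤ i → i ≤ k - sz k t n → g i ∈ cls k t ((n + i) % t)) ∧
    B = cls k t n ∪ Finset.image g (Finset.Icc 1 (k - sz k t n))}

section Cycle

variable {k t n m : ℕ}

lemma sz_le (k t n : ℕ) : sz k t n ≤ k := by
  unfold sz; split <;> omega

lemma sub_le_sz (k t n : ℕ) : k - t / 2 ≤ sz k t n := by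
  unfold sz; split <;> omega

lemma sub_sz_le (k t n : ℕ) : k - sz k t n ≤ t / 2 := by
  have := sub_le_sz k t n; omega

lemma sub_sz_eq (hk : t ≤ k) (n : ℕ) :
    k - sz k t n = if n ≤ (t - 1) / 2 then t / 2 else (t - 1) / 2 := by
  unfold sz; split <;> omega

lemma mod_eq_ite {a : ℕ} (h : a < 2 * t) : a % t = if a < t then a else a - t := by
  split_ifs with hat
  · exact Nat.mod_eq_of_lt hat
  · rw [Nat.mod_eq_sub_mod (by omega), Nat.mod_eq_of_lt (by omega)]

lemma eq_of_add_mod_eq {i j : ℕ} (hi : i < t) (hj : j < t)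
    (h : (n + i) % t = (n + j) % t) : i = j :=
  (Nat.ModEq.add_left_cancel' n h).eq_of_lt_of_lt hi hj

def InArc (k t n m : ℕ) : Prop :=
  ∃ r ∈ Icc 1 (k - sz k t n), (n + r) % t = m

lemma InArc.lt (hn : n < t) (h : InArc k t n m) : m < t := by
  obtain ⟨r, -, rfl⟩ := h
  exact Nat.mod_lt _ (by omega)

lemma inArc_or_inArc (hk : t ≤ k) (hn : n < t) (hm : m < t) (hnm : n ≠ m) :
    InArc k t n m ∨ InArc k t m n := by
  wlog hlt : n < m generalizing n m
  · exact (this hm hn hnm.symm (by omega)).symm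
  have hdn := sub_sz_eq hk n
  have hdm := sub_sz_eq hk m
  by_cases hc : m - n ≤ k - sz k t n
  · refine Or.inl ⟨m - n, mem_Icc.2 ⟨by omega, hc⟩, ?_⟩
    rw [Nat.add_sub_cancel' hlt.le, Nat.mod_eq_of_lt hm]
  · refine Or.inr ⟨t - (m - n), mem_Icc.2 ⟨by omega, by split_ifs at hdn hdm <;> omega⟩, ?_⟩
    rw [mod_eq_ite (by omega)]
    split_ifs <;> omega

lemma not_inArc_of_inArc (hk : t ≤ k) (hn : n < t) (h : InArc k t n m) : ¬ InArc k t m n := by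
  obtain ⟨r, hr, hnm⟩ := h
  rintro ⟨s, hs, hmn⟩
  rw [mem_Icc] at hr hs
  have hm : m < t := hnm ▸ Nat.mod_lt _ (by omega)
  have hdn := sub_sz_le k t n
  have hdm := sub_sz_le k t m
  rw [mod_eq_ite (by omega)] at hnm hmn
  have hdn' := sub_sz_eq hk n
  have hdm' := sub_sz_eq hk m
  split_ifs at hnm hmn hdn' hdm' <;> omega

end Cycle

section Blocks

variable {k t n m : ℕ}

lemma mem_cls {p : ℕ × ℕ} : p ∈ cls k t n ↔ p.1 = n ∧ p.2 < sz k t n := by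
  simp only [cls, mem_product, mem_singleton, mem_range]

lemma card_cls : #(cls k t n) = sz k t n := by
  simp [cls]

lemma mk_zero_mem_cls (hk : t / 2 < k) : (n, 0) ∈ cls k t n :=
  mem_cls.2 ⟨rfl, by have := sub_le_sz k t n; omega⟩

lemma disjoint_cls (h : n ≠ m) : Disjoint (cls k t n) (cls k t m) :=
  disjoint_left.2 fun _ hp hq => h ((mem_cls.1 hp).1.symm.trans (mem_cls.1 hq).1)

lemma exists_union_mem_Gfam (hn : n < t) {P : ℕ × ℕ → Prop}
    (h : ∀ r ∈ Icc 1 (k - sz k t n), ∃ p ∈ cls k t ((n + r) % t), P p) :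
    ∃ S : Finset (ℕ × ℕ), cls k t n ∪ S ∈ Gfam k t ∧ ∀ p ∈ S, P p := by
  choose! g hg hgP using h
  exact ⟨(Icc 1 (k - sz k t n)).image g,
    ⟨n, hn, g, fun i h₁ h₂ => hg i (mem_Icc.2 ⟨h₁, h₂⟩), rfl⟩, forall_mem_image.2 hgP⟩

lemma famUniform_Gfam (k t : ℕ) : FamUniform (Gfam k t) k := by
  rintro _ ⟨n, hn, g, hg, rfl⟩
  have hd : k - sz k t n < t := (sub_sz_le k t n).trans_lt (by omega)
  have hfst : ∀ i ∈ Icc 1 (k - sz k t n), (g i).1 = (n + i) % t := fun i hi =>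
    (mem_cls.1 (hg i (mem_Icc.1 hi).1 (mem_Icc.1 hi).2)).1
  have hinj : Set.InjOn g (Icc 1 (k - sz k t n)) := fun i hi j hj hij =>
    eq_of_add_mod_eq (by simp at hi; omega) (by simp at hj; omega)
      ((hfst i hi).symm.trans ((congrArg Prod.fst hij).trans (hfst j hj)))
  have hdisj : Disjoint (cls k t n) ((Icc 1 (k - sz k t n)).image g) := by
    refine disjoint_right.2 ?_
    rintro _ hp hpn
    obtain ⟨i, hi, rfl⟩ := mem_image.1 hp
    have hi' := mem_Icc.1 hi
    have h0 := eq_of_add_mod_eq (n := n) (i := i) (j := 0) (by omega) (by omega)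
      ((hfst i hi).symm.trans ((mem_cls.1 hpn).1.trans (Nat.mod_eq_of_lt hn).symm))
    omega
  rw [card_union_of_disjoint hdisj, card_image_of_injOn hinj, Nat.card_Icc, card_cls]
  have := sz_le k t n
  omega

lemma famIntersecting_Gfam (hk : t ≤ k) : FamIntersecting (Gfam k t) := by
  rintro _ ⟨n, hn, g, hg, rfl⟩ _ ⟨m, hm, g', hg', rfl⟩
  obtain rfl | hnm := eq_or_ne n m
  · have hp := mk_zero_mem_cls (k := k) (t := t) (n := n) (by omega)
    exact ⟨_, mem_union_left _ hp, mem_union_left _ hp⟩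
  rcases inArc_or_inArc hk hn hm hnm with ⟨r, hr, rfl⟩ | ⟨r, hr, rfl⟩
  · exact ⟨g r, mem_union_right _ (mem_image_of_mem g hr),
      mem_union_left _ (hg r (mem_Icc.1 hr).1 (mem_Icc.1 hr).2)⟩
  · exact ⟨g' r, mem_union_left _ (hg' r (mem_Icc.1 hr).1 (mem_Icc.1 hr).2),
      mem_union_right _ (mem_image_of_mem g' hr)⟩

end Blocks

section Blocking

variable {k t n m : ℕ} {C : Finset (ℕ × ℕ)}

lemma exists_cls_subset_of_isBlocking (hC : IsBlocking (Gfam k t) C) (hn : n < t)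
    (hdisj : Disjoint C (cls k t n)) : ∃ m, InArc k t n m ∧ cls k t m ⊆ C := by
  by_contra! h
  obtain ⟨S, hS, hSC⟩ := exists_union_mem_Gfam (P := (· ∉ C)) hn fun r hr =>
    not_subset.1 (h _ ⟨r, hr, rfl⟩)
  obtain ⟨p, hp, hpC⟩ := hC _ hS
  rcases mem_union.1 hp with hp | hp
  · exact disjoint_left.1 hdisj hpC hp
  · exact hSC p hp hpC

lemma eq_of_cls_subset (hk : t < k) (hCk : #C ≤ k) (hn : cls k t n ⊆ C) (hm : cls k t m ⊆ C) :
    n = m := by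
  by_contra hnm
  have := card_le_card (union_subset hn hm)
  rw [card_union_of_disjoint (disjoint_cls hnm), card_cls, card_cls] at this
  have := sub_le_sz k t n
  have := sub_le_sz k t m
  omega

lemma inter_cls_nonempty_of_inArc (hk : t < k) (hC : IsBlocking (Gfam k t) C) (hCk : #C ≤ k)
    (hm : m < t) (hmC : cls k t m ⊆ C) {j : ℕ} (hj : InArc k t m j) :
    (C ∩ cls k t j).Nonempty := by
  rw [← not_disjoint_iff_nonempty_inter]
  intro hdisj
  obtain ⟨m', hm', hm'C⟩ := exists_cls_subset_of_isBlocking hC (hj.lt hm) hdisj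
  rw [eq_of_cls_subset hk hCk hm'C hmC] at hm'
  exact not_inArc_of_inArc hk.le hm hj hm'

lemma exists_subset_of_cls_subset (hk : t < k) (hC : IsBlocking (Gfam k t) C) (hCk : #C ≤ k)
    (hm : m < t) (hmC : cls k t m ⊆ C) : ∃ B ∈ Gfam k t, B ⊆ C := by
  obtain ⟨S, hS, hSC⟩ := exists_union_mem_Gfam (P := (· ∈ C)) hm fun r hr => by
    obtain ⟨p, hp⟩ := inter_cls_nonempty_of_inArc hk hC hCk hm hmC ⟨r, hr, rfl⟩
    exact ⟨p, (mem_inter.1 hp).2, (mem_inter.1 hp).1⟩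
  exact ⟨_, hS, union_subset hmC hSC⟩

lemma le_card_of_cls_subset (hk : t < k) (hC : IsBlocking (Gfam k t) C) (hm : m < t)
    (hmC : cls k t m ⊆ C) : k ≤ #C := by
  by_contra! hCk
  obtain ⟨B, hB, hBC⟩ := exists_subset_of_cls_subset hk hC hCk.le hm hmC
  have := card_le_card hBC
  rw [famUniform_Gfam k t B hB] at this
  omega

lemma inter_cls_nonempty_of_card_lt (hk : t < k) (hC : IsBlocking (Gfam k t) C) (hCk : #C < k)
    (hn : n < t) : (C ∩ cls k t n).Nonempty := by
  rw [← not_disjoint_iff_nonempty_inter]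
  intro hdisj
  obtain ⟨m, hnm, hmC⟩ := exists_cls_subset_of_isBlocking hC hn hdisj
  exact (le_card_of_cls_subset hk hC (hnm.lt hn) hmC).not_gt hCk

lemma sum_card_inter_cls_le (C : Finset (ℕ × ℕ)) (s : Finset ℕ) :
    ∑ n ∈ s, #(C ∩ cls k t n) ≤ #C := by
  rw [← card_biUnion fun n _ m _ hnm =>
    (disjoint_cls hnm).mono inter_subset_right inter_subset_right]
  exact card_le_card (biUnion_subset.2 fun _ _ => inter_subset_left)

lemma le_card_of_isBlocking (hk : t < k) (hC : IsBlocking (Gfam k t) C) : t ≤ #C := by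
  rcases lt_or_ge #C k with hCk | hCk
  · calc t = ∑ _n ∈ range t, 1 := by simp
      _ ≤ ∑ n ∈ range t, #(C ∩ cls k t n) := sum_le_sum fun n hn =>
        card_pos.2 (inter_cls_nonempty_of_card_lt hk hC hCk (mem_range.1 hn))
      _ ≤ #C := sum_card_inter_cls_le C _
  · omega

end Blocking

lemma tau_eq_of_isBlocking {F : Set (Finset α)} {C : Finset α} {n : ℕ} (hC : IsBlocking F C)
    (hCn : #C = n) (hle : ∀ D, IsBlocking F D → n ≤ #D) : tau F = n :=
  le_antisymm (Nat.sInf_le ⟨C, hCn, hC⟩)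
    (le_csInf ⟨n, C, hCn, hC⟩ fun _ ⟨D, hD, hDb⟩ => hD ▸ hle D hDb)

section Transversals

variable {k t n : ℕ} {C : Finset (ℕ × ℕ)}

lemma isBlocking_image_range {f : ℕ → ℕ × ℕ} (hf : ∀ n < t, f n ∈ cls k t n) :
    IsBlocking (Gfam k t) ((range t).image f) := by
  rintro _ ⟨n, hn, g, hg, rfl⟩
  exact ⟨f n, mem_union_left _ (hf n hn), mem_image_of_mem f (mem_range.2 hn)⟩

lemma card_image_range {f : ℕ → ℕ × ℕ} (hf : ∀ n < t, f n ∈ cls k t n) :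
    #((range t).image f) = t := by
  rw [card_image_of_injOn, card_range]
  intro a ha b hb hab
  rw [← (mem_cls.1 (hf a (by simpa using ha))).1, ← (mem_cls.1 (hf b (by simpa using hb))).1,
    hab]

lemma tau_Gfam (hk : t < k) : tau (Gfam k t) = t := by
  have hf : ∀ n < t, (n, 0) ∈ cls k t n := fun _ _ => mk_zero_mem_cls (by omega)
  exact tau_eq_of_isBlocking (isBlocking_image_range hf) (card_image_range hf)
    fun _ => le_card_of_isBlocking hk

lemma image_range_mem_transversals (hk : t < k) {f : ℕ → ℕ × ℕ}
    (hf : ∀ n < t, f n ∈ cls k t n) : (range t).image f ∈ transversals (Gfam k t) :=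
  ⟨isBlocking_image_range hf, (card_image_range hf).trans (tau_Gfam hk).symm⟩

lemma card_inter_cls_eq_one (hk : t < k) {T : Finset (ℕ × ℕ)}
    (hT : T ∈ transversals (Gfam k t)) (hn : n < t) : #(T ∩ cls k t n) = 1 := by
  obtain ⟨hTb, hTt⟩ := hT
  rw [tau_Gfam hk] at hTt
  have hpos : ∀ i ∈ range t, 1 ≤ #(T ∩ cls k t i) := fun i hi =>
    card_pos.2 (inter_cls_nonempty_of_card_lt hk hTb (by omega) (mem_range.1 hi))
  have hsum : ∑ i ∈ range t, 1 = ∑ i ∈ range t, #(T ∩ cls k t i) :=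
    le_antisymm (sum_le_sum hpos) (by simpa [hTt] using sum_card_inter_cls_le T (range t))
  exact ((sum_eq_sum_iff_of_le hpos).1 hsum n (mem_range.2 hn)).symm

lemma exists_cls_subset_of_isBlocking_transversals (hk : t < k)
    (hC : IsBlocking (transversals (Gfam k t)) C) : ∃ m < t, cls k t m ⊆ C := by
  by_contra! h
  choose! f hf hfC using fun n (hn : n < t) => not_subset.1 (h n hn)
  obtain ⟨_, hp, hpC⟩ := hC _ (image_range_mem_transversals hk hf)
  obtain ⟨n, hn, rfl⟩ := mem_image.1 hp
  exact hfC n (mem_range.1 hn) hpC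

end Transversals

section Closure

variable {k t : ℕ} {B C : Finset (ℕ × ℕ)}

lemma mem_Gfam_of_isBlocking_union (hk : t < k)
    (hC : IsBlocking (Gfam k t ∪ transversals (Gfam k t)) C) (hCk : #C ≤ k) : C ∈ Gfam k t := by
  obtain ⟨m, hm, hmC⟩ :=
    exists_cls_subset_of_isBlocking_transversals hk fun B hB => hC B (Or.inr hB)
  obtain ⟨B, hB, hBC⟩ :=
    exists_subset_of_cls_subset hk (fun B hB => hC B (Or.inl hB)) hCk hm hmC
  rwa [← eq_of_subset_of_card_le hBC (hCk.trans (famUniform_Gfam k t B hB).ge)]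

lemma isBlocking_union_of_mem_Gfam (hk : t < k) (hB : B ∈ Gfam k t) :
    IsBlocking (Gfam k t ∪ transversals (Gfam k t)) B := by
  rintro A (hA | hA)
  · exact famIntersecting_Gfam hk.le A hA B hB
  · obtain ⟨n, hn, g, hg, rfl⟩ := hB
    obtain ⟨p, hp⟩ := card_pos.1 (card_inter_cls_eq_one hk hA hn).ge
    exact ⟨p, (mem_inter.1 hp).1, mem_union_left _ (mem_inter.1 hp).2⟩

lemma tau_union_transversals_Gfam (ht : 0 < t) (hk : t < k) :
    tau (Gfam k t ∪ transversals (Gfam k t)) = k := by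
  obtain ⟨S, hS, -⟩ := exists_union_mem_Gfam (k := k) (P := fun _ => True) ht fun _ _ =>
    ⟨_, mk_zero_mem_cls (by omega), trivial⟩
  refine tau_eq_of_isBlocking (isBlocking_union_of_mem_Gfam hk hS) (famUniform_Gfam k t _ hS)
    fun C hC => ?_
  by_contra! hCk
  exact hCk.ne (famUniform_Gfam k t C (mem_Gfam_of_isBlocking_union hk hC hCk.le))

lemma Gfam_eq_transversals_union (ht : 0 < t) (hk : t < k) :
    Gfam k t = transversals (Gfam k t ∪ transversals (Gfam k t)) := by
  have hτ := tau_union_transversals_Gfam ht hk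
  ext C
  exact ⟨fun hC => ⟨isBlocking_union_of_mem_Gfam hk hC, (famUniform_Gfam k t C hC).trans hτ.symm⟩,
    fun hC => mem_Gfam_of_isBlocking_union hk hC.1 (hC.2.trans hτ).le⟩

end Closure

theorem stmt_14 (k t : ℕ) (ht : 1 ≤ t) (hk : t + 1 ≤ k) :
    CIF (Gfam k t) k t ∧
    ∀ T ∈ transversals (Gfam k t), ∀ n < t, (T ∩ cls k t n).card = 1 :=
  ⟨⟨famUniform_Gfam k t, famIntersecting_Gfam (by omega), tau_Gfam hk, by omega,
      Gfam_eq_transversals_union ht hk⟩,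
    fun _ hT _ hn => card_inter_cls_eq_one hk hT hn⟩
end

section
/- Let M(k) be the maximum size of a maximal intersecting family of k-sets. Then for k ≥ t+1: if t = 2r−1, M(k) ≥ (2r−1)(k−r+1)^{r−1} + (k−r+1)^{2r−1}·M(k−2r+1); and if t = 2r, M(k) ≥ 2r(k−r)^{r−1} + (k−r)^r(k−r+1)^r·M(k−2r). -/
open Finset

variable {α : Type*} {β : Type*}

/-- `M k`: the maximum number of blocks in a maximal intersecting family of `k`-sets. -/
noncomputable def M (k : ℕ) : ℕ :=
  sSup {n : ℕ | ∃ F : Set (Finset ℕ), MIF F k ∧ F.ncard = n}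


/-!
Index `t` disjoint classes `P i` by the vertices of a tournament and give `P i` exactly
`k - outdeg i` points. The blocks `P i ∪ {one point of each class beaten by i}` form a closed
intersecting family `G` with `τ(G) = t`: a blocking set missing a class contains a whole class
beaten by it, and a counting argument then shows that blocking `t`-sets are exactly the sets of
representatives, one point per class. A set meeting all blocks and all representative sets
contains a whole class, hence a block. So `|G| = ∑ᵢ ∏_{i → j} |P j|` and `|G^⊤| = ∏ⱼ |P j|`, and
adjoining to `G` the unions of a representative set with a block of an optimal `MIF(k - t)` on new
points yields a maximal intersecting family of `k`-sets with `|G| + |G^⊤| M(k - t)` blocks.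
Circulant tournaments on `2r - 1` vertices (all out-degrees `r - 1`) and on `2r` vertices
(out-degrees `r` and `r - 1`) give the two bounds. `M k` is a genuine maximum since an `MIF(k)`
has at most `k ^ k` blocks (Erdős–Lovász).
-/

section Blocking

variable {F T : Set (Finset α)} {C : Finset α} {n : ℕ}

theorem tau_le_card (h : IsBlocking F C) : tau F ≤ C.card :=
  Nat.sInf_le ⟨C, rfl, h⟩

theorem transversals_nonempty (h : HasBlocking F) : (transversals F).Nonempty := by
  obtain ⟨C, hC⟩ := h
  obtain ⟨D, hDcard, hD⟩ := Nat.sInf_mem (⟨C.card, C, rfl, hC⟩ :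
    {n | ∃ C : Finset α, C.card = n ∧ IsBlocking F C}.Nonempty)
  exact ⟨D, hD, hDcard⟩

theorem FamIntersecting.hasBlocking (h : FamIntersecting F) : HasBlocking F := by
  rcases F.eq_empty_or_nonempty with rfl | ⟨B, hB⟩
  · exact ⟨∅, fun _ hB => absurd hB (Set.notMem_empty _)⟩
  · exact ⟨B, fun A hA => h A hA B hB⟩

theorem transversals_eq (hT : ∀ C ∈ T, IsBlocking F C ∧ C.card = n) (hne : T.Nonempty)
    (hmin : ∀ C, IsBlocking F C → C.card ≤ n → C ∈ T) : transversals F = T := by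
  obtain ⟨C₀, hC₀⟩ := hne
  obtain ⟨D, hD, hDcard⟩ := transversals_nonempty ⟨C₀, (hT C₀ hC₀).1⟩
  have htau_le : tau F ≤ n := (hT C₀ hC₀).2 ▸ tau_le_card (hT C₀ hC₀).1
  have htau : tau F = n := by
    rw [← hDcard, (hT D (hmin D hD (hDcard ▸ htau_le))).2]
  ext C
  refine ⟨fun ⟨hC, hCcard⟩ => hmin C hC (by omega), fun hC => ⟨(hT C hC).1, ?_⟩⟩
  rw [htau, (hT C hC).2]

theorem mem_pts {x : α} : x ∈ pts F ↔ ∃ B ∈ F, x ∈ B := by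
  simp [pts]

theorem subset_pts {B : Finset α} (hB : B ∈ F) : (B : Set α) ⊆ pts F :=
  fun _ hx => mem_pts.2 ⟨B, hB, hx⟩

/-- A point of a transversal outside every block could be dropped, contradicting minimality. -/
theorem subset_pts_of_mem_transversals {C : Finset α} (hC : C ∈ transversals F) :
    (C : Set α) ⊆ pts F := by
  classical
  intro x hxC
  by_contra hx
  have hblock : IsBlocking F (C.erase x) := fun B hB => by
    obtain ⟨y, hyB, hyC⟩ := hC.1 B hB
    exact ⟨y, hyB, Finset.mem_erase.2 ⟨fun h => hx (h ▸ subset_pts hB hyB), hyC⟩⟩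
  have := tau_le_card hblock
  rw [Finset.card_erase_of_mem hxC, ← hC.2] at this
  have := Finset.card_pos.2 ⟨x, hxC⟩
  omega

end Blocking

namespace MIF

variable {F : Set (Finset α)} {C : Finset α} {k : ℕ}

theorem of_isBlocking (hu : FamUniform F k) (hi : FamIntersecting F) (hne : F.Nonempty)
    (hmin : ∀ C, IsBlocking F C → C.card ≤ k → C ∈ F) : MIF F k :=
  ⟨hu, hi.hasBlocking,
    (transversals_eq (fun C hC => ⟨fun B hB => hi B hB C hC, hu C hC⟩) hne hmin).symm⟩

theorem nonempty (h : MIF F k) : F.Nonempty :=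
  h.2.2 ▸ transversals_nonempty h.2.1

theorem isBlocking_of_mem (h : MIF F k) {B : Finset α} (hB : B ∈ F) : IsBlocking F B :=
  (h.2.2 ▸ hB : B ∈ transversals F).1

theorem intersecting (h : MIF F k) : FamIntersecting F :=
  fun A hA _ hB => h.isBlocking_of_mem hB A hA

theorem pos (h : MIF F k) : 0 < k := by
  obtain ⟨B, hB⟩ := h.nonempty
  obtain ⟨x, hx, -⟩ := h.isBlocking_of_mem hB B hB
  exact h.1 B hB ▸ Finset.card_pos.2 ⟨x, hx⟩

theorem tau_eq (h : MIF F k) : tau F = k := by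
  obtain ⟨B, hB⟩ := h.nonempty
  rw [← h.1 B hB, ← (h.2.2 ▸ hB : B ∈ transversals F).2]

theorem le_card (h : MIF F k) (hC : IsBlocking F C) : k ≤ C.card :=
  h.tau_eq ▸ tau_le_card hC

theorem mem_of_isBlocking (h : MIF F k) (hC : IsBlocking F C) (hCk : C.card = k) : C ∈ F := by
  rw [h.2.2]
  exact ⟨hC, by rw [hCk, h.tau_eq]⟩

end MIF

section Bound

variable {F : Set (Finset α)} {k : ℕ}

/-- `W` is not blocking, so some block `A` misses it, and every block through `W` also passes
through one of the `k` points of `A`. -/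
theorem exists_finset_cover_blocks_superset (hu : FamUniform F k) (hi : FamIntersecting F)
    (hτ : ∀ C, IsBlocking F C → k ≤ C.card) :
    ∀ n (W : Finset α), W.card + n = k →
      ∃ T : Finset (Finset α), T.card ≤ k ^ n ∧ ∀ B ∈ F, W ⊆ B → B ∈ T := by
  classical
  intro n
  induction n with
  | zero =>
    intro W hW
    refine ⟨{W}, by simp, fun B hB hWB => ?_⟩
    rw [Finset.mem_singleton, Finset.eq_of_subset_of_card_le hWB (by rw [hu B hB]; omega)]
  | succ n ih =>
    intro W hW
    have hWb : ¬ IsBlocking F W := fun h => by have := hτ W h; omega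
    simp only [IsBlocking, not_forall, not_exists, not_and] at hWb
    obtain ⟨A, hA, hAW⟩ := hWb
    choose T hTcard hT using fun x (hx : x ∈ A) =>
      ih (insert x W) (by rw [Finset.card_insert_of_notMem (hAW x hx)]; omega)
    refine ⟨A.attach.biUnion fun x => T x.1 x.2, ?_, fun B hB hWB => ?_⟩
    · calc _ ≤ ∑ x ∈ A.attach, (T x.1 x.2).card := Finset.card_biUnion_le
        _ ≤ ∑ _x ∈ A.attach, k ^ n := Finset.sum_le_sum fun x _ => hTcard x.1 x.2
        _ = k ^ (n + 1) := by rw [Finset.sum_const, Finset.card_attach, hu A hA]; ring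
    · obtain ⟨x, hxB, hxA⟩ := hi B hB A hA
      exact Finset.mem_biUnion.2
        ⟨⟨x, hxA⟩, Finset.mem_attach _ _, hT x hxA B hB (Finset.insert_subset hxB hWB)⟩

theorem exists_finset_superset_card_le_pow (hu : FamUniform F k) (hi : FamIntersecting F)
    (hτ : ∀ C, IsBlocking F C → k ≤ C.card) :
    ∃ T : Finset (Finset α), T.card ≤ k ^ k ∧ F ⊆ T := by
  obtain ⟨T, hT, hFT⟩ := exists_finset_cover_blocks_superset hu hi hτ k ∅ (by simp)
  exact ⟨T, hT, fun B hB => hFT B hB (Finset.empty_subset B)⟩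

theorem MIF.finite (h : MIF F k) : F.Finite := by
  obtain ⟨T, -, hFT⟩ := exists_finset_superset_card_le_pow h.1 h.intersecting fun _ => h.le_card
  exact T.finite_toSet.subset hFT

theorem MIF.ncard_le (h : MIF F k) : F.ncard ≤ k ^ k := by
  obtain ⟨T, hT, hFT⟩ := exists_finset_superset_card_le_pow h.1 h.intersecting fun _ => h.le_card
  exact (Set.ncard_le_ncard hFT T.finite_toSet).trans (by rwa [Set.ncard_coe_finset])

end Bound

theorem mif_powersetCard [DecidableEq α] {X : Finset α} {m : ℕ} (hm : 1 ≤ m)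
    (hX : X.card = 2 * m - 1) : MIF (X.powersetCard m : Set (Finset α)) m := by
  have mem : ∀ {B : Finset α}, B ∈ (X.powersetCard m : Set (Finset α)) ↔ B ⊆ X ∧ B.card = m :=
    by simp [Finset.mem_powersetCard]
  refine MIF.of_isBlocking (fun B hB => (mem.1 hB).2) (fun A hA B hB => ?_) ?_ fun C hC hCm => ?_
  · obtain ⟨hAX, hA⟩ := mem.1 hA
    obtain ⟨hBX, hB⟩ := mem.1 hB
    have hU := Finset.card_le_card (Finset.union_subset hAX hBX)
    have := Finset.card_union_add_card_inter A B
    obtain ⟨x, hx⟩ := Finset.card_pos.1 (show 0 < (A ∩ B).card by omega)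
    exact ⟨x, (Finset.mem_inter.1 hx).1, (Finset.mem_inter.1 hx).2⟩
  · obtain ⟨B, hBX, hB⟩ := Finset.exists_subset_card_eq (show m ≤ X.card by omega)
    exact ⟨B, mem.2 ⟨hBX, hB⟩⟩
  · have hsmall : (X \ C).card < m := by
      by_contra! hlarge
      obtain ⟨B, hBsub, hB⟩ := Finset.exists_subset_card_eq hlarge
      obtain ⟨x, hxB, hxC⟩ := hC B (mem.2 ⟨hBsub.trans Finset.sdiff_subset, hB⟩)
      exact (Finset.mem_sdiff.1 (hBsub hxB)).2 hxC
    have hsd : (X \ C).card = X.card - (C ∩ X).card := Finset.card_sdiff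
    have hCX : C ∩ X = C :=
      Finset.eq_of_subset_of_card_le Finset.inter_subset_left (by omega)
    exact mem.2 ⟨Finset.inter_eq_left.1 hCX, by rw [hCX] at hsd; omega⟩

theorem bddAbove_ncard_mif (k : ℕ) :
    BddAbove {n : ℕ | ∃ F : Set (Finset ℕ), MIF F k ∧ F.ncard = n} :=
  ⟨k ^ k, fun _ ⟨_, hF, hn⟩ => hn ▸ hF.ncard_le⟩

theorem MIF.ncard_le_M {F : Set (Finset ℕ)} {k : ℕ} (h : MIF F k) : F.ncard ≤ M k :=
  le_csSup (bddAbove_ncard_mif k) ⟨F, h, rfl⟩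

theorem exists_mif_ncard_eq_M {m : ℕ} (hm : 1 ≤ m) :
    ∃ F : Set (Finset ℕ), MIF F m ∧ F.ncard = M m :=
  Nat.sSup_mem (s := {n | ∃ F : Set (Finset ℕ), MIF F m ∧ F.ncard = n})
    ⟨_, _, mif_powersetCard hm (Finset.card_range (2 * m - 1)), rfl⟩ (bddAbove_ncard_mif m)

theorem union_inj_of_subset_of_disjoint [DecidableEq α] {U : Set α} {a b a' b' : Finset α}
    (ha : (a : Set α) ⊆ U) (ha' : (a' : Set α) ⊆ U) (hb : Disjoint (b : Set α) U)
    (hb' : Disjoint (b' : Set α) U) (h : a ∪ b = a' ∪ b') : a = a' ∧ b = b' := by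
  have key : ∀ x, (x ∈ a ↔ x ∈ a') ∧ (x ∈ b ↔ x ∈ b') := fun x => by
    have hx := congrArg (x ∈ ·) h
    simp only [Finset.mem_union, eq_iff_iff] at hx
    have := @ha x; have := @ha' x
    have := @Set.disjoint_left.1 hb x; have := @Set.disjoint_left.1 hb' x
    simp only [Finset.mem_coe] at *
    tauto
  exact ⟨Finset.ext fun x => (key x).1, Finset.ext fun x => (key x).2⟩

section Star

variable [DecidableEq α] {F A : Set (Finset α)} {k t : ℕ}

theorem CIF.mem_union_star_of_isBlocking (hF : CIF F k t) (hA : MIF A (k - t))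
    (hdisj : Disjoint (pts F) (pts A)) {C : Finset α}
    (hC : IsBlocking (F ∪ star A (transversals F)) C) (hCk : C.card ≤ k) :
    C ∈ F ∪ star A (transversals F) := by
  classical
  obtain ⟨hFu, -, hτ, -, hclosed⟩ := hF
  by_cases hCT : IsBlocking (transversals F) C
  · -- `C` blocks `F ∪ F^⊤`, whose transversals are the blocks of `F`
    have hCFT : IsBlocking (F ∪ transversals F) C := by
      rintro B (hB | hB)
      exacts [hC B (Or.inl hB), hCT B hB]
    obtain ⟨B₀, hB₀⟩ : F.Nonempty := hclosed ▸ transversals_nonempty ⟨C, hCFT⟩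
    have hB₀' : B₀ ∈ transversals (F ∪ transversals F) := hclosed ▸ hB₀
    have hkC : k ≤ C.card := hFu B₀ hB₀ ▸ hB₀'.2 ▸ tau_le_card hCFT
    left
    rw [hclosed]
    exact ⟨hCFT, by rw [← hB₀'.2, hFu B₀ hB₀]; omega⟩
  · -- some transversal `D` misses `C`, so `C` must block `A` on the new points
    simp only [IsBlocking, not_forall, not_exists, not_and] at hCT
    obtain ⟨D, hD, hDC⟩ := hCT
    have hCF : IsBlocking F (C.filter (· ∉ pts A)) := fun B hB => by
      obtain ⟨x, hxB, hxC⟩ := hC B (Or.inl hB)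
      exact ⟨x, hxB, Finset.mem_filter.2 ⟨hxC, Set.disjoint_left.1 hdisj (subset_pts hB hxB)⟩⟩
    have hCA : IsBlocking A (C.filter (· ∈ pts A)) := fun a ha => by
      obtain ⟨x, hx, hxC⟩ := hC (a ∪ D) (Or.inr ⟨a, ha, D, hD, rfl⟩)
      have hxa : x ∈ a := (Finset.mem_union.1 hx).resolve_right fun hxD => hDC x hxD hxC
      exact ⟨x, hxa, Finset.mem_filter.2 ⟨hxC, subset_pts ha hxa⟩⟩
    have h₁ := tau_le_card hCF
    have h₂ := hA.le_card hCA
    have hsum := Finset.card_filter_add_card_filter_not (s := C) (· ∈ pts A)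
    right
    exact ⟨_, hA.mem_of_isBlocking hCA (by omega), _, ⟨hCF, by omega⟩,
      (Finset.filter_union_filter_not_eq _ C).symm⟩

theorem CIF.mif_union_star (hF : CIF F k t) (hA : MIF A (k - t))
    (hdisj : Disjoint (pts F) (pts A)) : MIF (F ∪ star A (transversals F)) k := by
  obtain ⟨hFu, hFi, hτ, htk, -⟩ := id hF
  refine MIF.of_isBlocking ?_ ?_ ?_ fun C hC hCk => hF.mem_union_star_of_isBlocking hA hdisj hC hCk
  · rintro B (hB | ⟨a, ha, D, hD, rfl⟩)
    · exact hFu B hB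
    · have had : Disjoint a D := Finset.disjoint_coe.1
        ((hdisj.mono_left (subset_pts_of_mem_transversals hD)).symm.mono_left (subset_pts ha))
      rw [Finset.card_union_of_disjoint had, hA.1 a ha, hD.2, hτ]
      omega
  · rintro B (hB | ⟨a, ha, D, hD, rfl⟩) B' (hB' | ⟨a', ha', D', hD', rfl⟩)
    · exact hFi B hB B' hB'
    · obtain ⟨x, hxB, hxD⟩ := hD'.1 B hB
      exact ⟨x, hxB, Finset.mem_union_right _ hxD⟩
    · obtain ⟨x, hxB, hxD⟩ := hD.1 B' hB'
      exact ⟨x, Finset.mem_union_right _ hxD, hxB⟩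
    · obtain ⟨x, hxa, hxa'⟩ := hA.intersecting a ha a' ha'
      exact ⟨x, Finset.mem_union_left _ hxa, Finset.mem_union_left _ hxa'⟩
  · obtain ⟨a, ha⟩ := hA.nonempty
    obtain ⟨D, hD⟩ := transversals_nonempty hFi.hasBlocking
    exact ⟨a ∪ D, Or.inr ⟨a, ha, D, hD, rfl⟩⟩

theorem CIF.ncard_union_star (hF : CIF F k t) (hA : MIF A (k - t))
    (hdisj : Disjoint (pts F) (pts A)) :
    (F ∪ star A (transversals F)).ncard = F.ncard + (transversals F).ncard * A.ncard := by
  have hfin := (hF.mif_union_star hA hdisj).finite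
  have hT : ∀ D ∈ transversals F, Disjoint (D : Set α) (pts A) := fun D hD =>
    hdisj.mono_left (subset_pts_of_mem_transversals hD)
  have hstar : star A (transversals F) = (fun p => p.1 ∪ p.2) '' (A ×ˢ transversals F) := by
    ext C
    constructor
    · rintro ⟨a, ha, D, hD, rfl⟩
      exact ⟨(a, D), ⟨ha, hD⟩, rfl⟩
    · rintro ⟨⟨a, D⟩, ⟨ha, hD⟩, rfl⟩
      exact ⟨a, ha, D, hD, rfl⟩
  have hinj : Set.InjOn (fun p : Finset α × Finset α => p.1 ∪ p.2) (A ×ˢ transversals F) := by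
    rintro ⟨a, D⟩ ⟨ha, hD⟩ ⟨a', D'⟩ ⟨ha', hD'⟩ h
    obtain ⟨rfl, rfl⟩ := union_inj_of_subset_of_disjoint (subset_pts ha) (subset_pts ha')
      (hT D hD) (hT D' hD') h
    rfl
  have hFstar : Disjoint F (star A (transversals F)) := by
    refine Set.disjoint_left.2 fun B hB ⟨a, ha, D, hD, hBaD⟩ => ?_
    obtain ⟨x, hx⟩ := Finset.card_pos.1 (hA.1 a ha ▸ hA.pos)
    exact Set.disjoint_left.1 hdisj (subset_pts hB (hBaD ▸ Finset.mem_union_left D hx))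
      (subset_pts ha hx)
  rw [Set.ncard_union_eq hFstar (hfin.subset Set.subset_union_left)
    (hfin.subset Set.subset_union_right), hstar, hinj.ncard_image, Set.ncard_prod, mul_comm]

end Star

section ChoiceSets

open Function

variable {ι : Type*} {P : ι → Finset α}

theorem eq_of_mem_of_pairwise_disjoint (hP : Pairwise (Disjoint on P)) {x : α} {i j : ι}
    (hi : x ∈ P i) (hj : x ∈ P j) : i = j := by
  by_contra h
  exact Finset.disjoint_left.1 (hP h) hi hj

variable [DecidableEq ι] [DecidableEq α] {s : Finset ι} {D : Finset α}

variable (P) in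
def choiceSets (s : Finset ι) : Finset (Finset α) :=
  (Fintype.piFinset fun j : s => P j).image fun g => univ.image g

theorem mem_choiceSets :
    D ∈ choiceSets P s ↔ ∃ g : s → α, (∀ j : s, g j ∈ P j) ∧ univ.image g = D := by
  simp [choiceSets, Fintype.mem_piFinset]

theorem exists_mem_choiceSets_forall_mem {p : α → Prop} (h : ∀ j ∈ s, ∃ x ∈ P j, p x) :
    ∃ D ∈ choiceSets P s, ∀ x ∈ D, p x := by
  choose g hgP hgp using h
  refine ⟨univ.image fun j : s => g j j.2, mem_choiceSets.2 ⟨_, fun j => hgP j j.2, rfl⟩, ?_⟩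
  simp only [Finset.mem_image, Finset.mem_univ, true_and, forall_exists_index]
  rintro x j rfl
  exact hgp j j.2

theorem choiceSets_nonempty (hne : ∀ j ∈ s, (P j).Nonempty) : (choiceSets P s).Nonempty := by
  obtain ⟨D, hD, -⟩ := exists_mem_choiceSets_forall_mem (p := fun _ => True)
    fun j hj => (hne j hj).elim fun x hx => ⟨x, hx, trivial⟩
  exact ⟨D, hD⟩

theorem exists_mem_of_mem_choiceSets (hD : D ∈ choiceSets P s) {j : ι} (hj : j ∈ s) :
    ∃ x ∈ D, x ∈ P j := by
  obtain ⟨g, hg, rfl⟩ := mem_choiceSets.1 hD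
  exact ⟨g ⟨j, hj⟩, Finset.mem_image_of_mem _ (Finset.mem_univ _), hg _⟩

theorem exists_mem_class_of_mem_choiceSets (hD : D ∈ choiceSets P s) {x : α} (hx : x ∈ D) :
    ∃ j ∈ s, x ∈ P j := by
  obtain ⟨g, hg, rfl⟩ := mem_choiceSets.1 hD
  obtain ⟨j, -, rfl⟩ := Finset.mem_image.1 hx
  exact ⟨j, j.2, hg j⟩

theorem eq_of_mem_choiceSets_of_mem_class (hP : Pairwise (Disjoint on P))
    (hD : D ∈ choiceSets P s) {j : ι} {x y : α} (hx : x ∈ D) (hxj : x ∈ P j) (hy : y ∈ D)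
    (hyj : y ∈ P j) : x = y := by
  obtain ⟨g, hg, rfl⟩ := mem_choiceSets.1 hD
  obtain ⟨a, -, rfl⟩ := Finset.mem_image.1 hx
  obtain ⟨b, -, rfl⟩ := Finset.mem_image.1 hy
  have hab : (a : ι) = b :=
    (eq_of_mem_of_pairwise_disjoint hP (hg a) hxj).trans
      (eq_of_mem_of_pairwise_disjoint hP (hg b) hyj).symm
  rw [Subtype.ext hab]

theorem card_of_mem_choiceSets (hP : Pairwise (Disjoint on P)) (hD : D ∈ choiceSets P s) :
    D.card = s.card := by
  obtain ⟨g, hg, rfl⟩ := mem_choiceSets.1 hD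
  have hinj : Injective g := fun a b hab =>
    Subtype.ext (eq_of_mem_of_pairwise_disjoint hP (hg a) (hab ▸ hg b))
  rw [Finset.card_image_of_injective _ hinj, Finset.card_univ, Fintype.card_coe]

theorem card_choiceSets (hP : Pairwise (Disjoint on P)) :
    (choiceSets P s).card = ∏ j ∈ s, (P j).card := by
  rw [choiceSets, Finset.card_image_of_injOn, Fintype.card_piFinset]
  · exact Finset.prod_coe_sort s fun j => (P j).card
  intro g hg g' hg' hgg'
  simp only [Finset.mem_coe, Fintype.mem_piFinset] at hg hg' hgg'
  funext j
  obtain ⟨l, -, hl⟩ := Finset.mem_image.1 (hgg' ▸ Finset.mem_image_of_mem g (Finset.mem_univ j))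
  rw [← hl, Subtype.ext (eq_of_mem_of_pairwise_disjoint hP (hg' l) (hl ▸ hg j))]

theorem disjoint_of_mem_choiceSets (hP : Pairwise (Disjoint on P)) {i : ι} (hi : i ∉ s)
    (hD : D ∈ choiceSets P s) : Disjoint (P i) D := by
  refine Finset.disjoint_left.2 fun x hxi hxD => ?_
  obtain ⟨j, hj, hxj⟩ := exists_mem_class_of_mem_choiceSets hD hxD
  exact hi (eq_of_mem_of_pairwise_disjoint hP hxj hxi ▸ hj)

end ChoiceSets

/-- `S i` is the set of vertices beaten by `i`. -/
structure IsTournament {ι : Type*} (S : ι → Finset ι) : Prop where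
  asymm : ∀ i j, j ∈ S i → i ∉ S j
  total : ∀ i j, i ≠ j → j ∈ S i ∨ i ∈ S j

namespace IsTournament

variable {ι : Type*} {S : ι → Finset ι}

theorem notMem_self (hS : IsTournament S) (i : ι) : i ∉ S i :=
  fun h => hS.asymm i i h h

theorem card_filter_mem_add_card_lt [Fintype ι] [DecidableEq ι] (hS : IsTournament S) (l : ι) :
    (univ.filter (l ∈ S ·)).card + (S l).card < Fintype.card ι := by
  have hdisj : Disjoint (univ.filter (l ∈ S ·)) (insert l (S l)) := by
    refine Finset.disjoint_left.2 fun i hi hi' => ?_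
    have hli := (Finset.mem_filter.1 hi).2
    rcases Finset.mem_insert.1 hi' with rfl | hil
    exacts [hS.notMem_self i hli, hS.asymm i l hli hil]
  have := Finset.card_le_univ (univ.filter (l ∈ S ·) ∪ insert l (S l))
  rw [Finset.card_union_of_disjoint hdisj, Finset.card_insert_of_notMem (hS.notMem_self l)] at this
  omega

end IsTournament

section TournamentFamily

open Function

variable {ι : Type*} [Fintype ι] [DecidableEq ι] [DecidableEq α] {P : ι → Finset α}
  {S : ι → Finset ι} {k : ℕ} {B C : Finset α}

variable (P S) in
/-- The closed intersecting family `G(k, t)` of the paper. -/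
def tournamentFamily : Finset (Finset α) :=
  univ.biUnion fun i => (choiceSets P (S i)).image (P i ∪ ·)

theorem mem_tournamentFamily :
    B ∈ tournamentFamily P S ↔ ∃ i, ∃ D ∈ choiceSets P (S i), P i ∪ D = B := by
  simp [tournamentFamily]

theorem card_of_mem_tournamentFamily (hP : Pairwise (Disjoint on P)) (hS : IsTournament S)
    (hk : ∀ i, (P i).card + (S i).card = k) (hB : B ∈ tournamentFamily P S) : B.card = k := by
  obtain ⟨i, D, hD, rfl⟩ := mem_tournamentFamily.1 hB
  rw [Finset.card_union_of_disjoint (disjoint_of_mem_choiceSets hP (hS.notMem_self i) hD),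
    card_of_mem_choiceSets hP hD, hk]

theorem exists_mem_class_of_mem_tournamentFamily (hB : B ∈ tournamentFamily P S) {x : α}
    (hx : x ∈ B) : ∃ i, x ∈ P i := by
  obtain ⟨i, D, hD, rfl⟩ := mem_tournamentFamily.1 hB
  rcases Finset.mem_union.1 hx with hxi | hxD
  · exact ⟨i, hxi⟩
  · obtain ⟨j, -, hxj⟩ := exists_mem_class_of_mem_choiceSets hD hxD
    exact ⟨j, hxj⟩

theorem famIntersecting_tournamentFamily (hS : IsTournament S) (hne : ∀ i, (P i).Nonempty) :
    FamIntersecting (tournamentFamily P S : Set (Finset α)) := by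
  intro B hB B' hB'
  obtain ⟨i, D, hD, rfl⟩ := mem_tournamentFamily.1 hB
  obtain ⟨i', D', hD', rfl⟩ := mem_tournamentFamily.1 hB'
  by_cases hii' : i = i'
  · obtain ⟨x, hx⟩ := hne i
    exact ⟨x, Finset.mem_union_left _ hx, Finset.mem_union_left _ (hii' ▸ hx)⟩
  rcases hS.total i i' hii' with h | h
  · obtain ⟨x, hxD, hx⟩ := exists_mem_of_mem_choiceSets hD h
    exact ⟨x, Finset.mem_union_right _ hxD, Finset.mem_union_left _ hx⟩
  · obtain ⟨x, hxD, hx⟩ := exists_mem_of_mem_choiceSets hD' h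
    exact ⟨x, Finset.mem_union_left _ hx, Finset.mem_union_right _ hxD⟩

theorem exists_mem_of_mem_tournamentFamily_of_mem_choiceSets (hB : B ∈ tournamentFamily P S)
    {D : Finset α} (hD : D ∈ choiceSets P univ) : ∃ x ∈ B, x ∈ D := by
  obtain ⟨i, D', -, rfl⟩ := mem_tournamentFamily.1 hB
  obtain ⟨x, hxD, hx⟩ := exists_mem_of_mem_choiceSets hD (Finset.mem_univ i)
  exact ⟨x, Finset.mem_union_left _ hx, hxD⟩

theorem exists_class_subset_of_isBlocking (hC : IsBlocking (tournamentFamily P S : Set _) C)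
    {i : ι} (hi : ∀ x ∈ P i, x ∉ C) : ∃ l ∈ S i, P l ⊆ C := by
  by_contra! h
  obtain ⟨D, hD, hDC⟩ := exists_mem_choiceSets_forall_mem (p := (· ∉ C)) (s := S i)
    fun l hl => Finset.not_subset.1 (h l hl)
  obtain ⟨x, hx, hxC⟩ := hC (P i ∪ D) (mem_tournamentFamily.2 ⟨i, D, hD, rfl⟩)
  rcases Finset.mem_union.1 hx with hxi | hxD
  exacts [hi x hxi hxC, hDC x hxD hxC]

theorem le_card_inter_class (hS : IsTournament S) (hk : ∀ i, (P i).card + (S i).card = k)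
    (ht : Fintype.card ι ≤ k) (i : ι) :
    (if ∃ x ∈ P i, x ∈ C then 1 else 0) +
        (if P i ⊆ C then (univ.filter (i ∈ S ·)).card + (k - Fintype.card ι) else 0) ≤
      (C ∩ P i).card := by
  have hin := hS.card_filter_mem_add_card_lt i
  have hki := hk i
  by_cases hfull : P i ⊆ C
  · rw [if_pos hfull, Finset.inter_eq_right.2 hfull]
    split_ifs <;> omega
  · rw [if_neg hfull]
    split_ifs with htouch
    · obtain ⟨x, hx, hxC⟩ := htouch
      exact Finset.card_pos.2 ⟨x, Finset.mem_inter.2 ⟨hxC, hx⟩⟩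
    · exact Nat.zero_le _

/-- Every class is met by `C` or beats a class inside `C`; a class inside `C` is larger than its
in-degree by more than `k - t`. -/
theorem card_add_mul_le_card_of_isBlocking (hP : Pairwise (Disjoint on P))
    (hS : IsTournament S) (hk : ∀ i, (P i).card + (S i).card = k) (ht : Fintype.card ι ≤ k)
    (hC : IsBlocking (tournamentFamily P S : Set _) C) :
    Fintype.card ι + (univ.filter (P · ⊆ C)).card * (k - Fintype.card ι) ≤ C.card := by
  have hcover : Fintype.card ι ≤ (univ.filter fun i => ∃ x ∈ P i, x ∈ C).card +
      ∑ l ∈ univ.filter (P · ⊆ C), (univ.filter (l ∈ S ·)).card := by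
    calc Fintype.card ι = (univ : Finset ι).card := Finset.card_univ.symm
      _ ≤ ((univ.filter fun i => ∃ x ∈ P i, x ∈ C) ∪
          (univ.filter (P · ⊆ C)).biUnion fun l => univ.filter (l ∈ S ·)).card := by
        refine Finset.card_le_card fun i _ => ?_
        by_cases hi : ∃ x ∈ P i, x ∈ C
        · exact Finset.mem_union_left _ (Finset.mem_filter.2 ⟨Finset.mem_univ i, hi⟩)
        · simp only [not_exists, not_and] at hi
          obtain ⟨l, hl, hlC⟩ := exists_class_subset_of_isBlocking hC hi
          exact Finset.mem_union_right _
            (Finset.mem_biUnion.2 ⟨l, by simpa using hlC, by simpa using hl⟩)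
      _ ≤ _ := (Finset.card_union_le _ _).trans (Nat.add_le_add_left Finset.card_biUnion_le _)
  have hsum : ∑ i, (C ∩ P i).card ≤ C.card := by
    rw [← Finset.card_biUnion]
    · exact Finset.card_le_card (Finset.biUnion_subset.2 fun i _ => Finset.inter_subset_left)
    · intro i _ j _ hij
      exact (hP hij).mono Finset.inter_subset_right Finset.inter_subset_right
  have hclass := Finset.sum_le_sum fun i (_ : i ∈ univ) => le_card_inter_class (C := C) hS hk ht i
  simp only [Finset.sum_add_distrib, Finset.sum_boole, Nat.cast_id, ← Finset.sum_filter,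
    Finset.sum_const, smul_eq_mul] at hclass
  omega

theorem transversals_tournamentFamily (hP : Pairwise (Disjoint on P)) (hS : IsTournament S)
    (hk : ∀ i, (P i).card + (S i).card = k) (ht : Fintype.card ι < k)
    (hne : ∀ i, (P i).Nonempty) :
    transversals (tournamentFamily P S : Set (Finset α)) = choiceSets P univ := by
  refine transversals_eq (n := Fintype.card ι) (fun D hD => ⟨fun B hB => ?_, ?_⟩) ?_
    fun C hC hCt => ?_
  · exact exists_mem_of_mem_tournamentFamily_of_mem_choiceSets hB hD
  · rw [card_of_mem_choiceSets hP hD, Finset.card_univ]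
  · exact choiceSets_nonempty fun i _ => hne i
  -- a blocking set of size `≤ t` contains no class, hence meets every class
  have hfull := card_add_mul_le_card_of_isBlocking hP hS hk ht.le hC
  have hnofull : ∀ l, ¬ P l ⊆ C := fun l hl => by
    have : 0 < (univ.filter (P · ⊆ C)).card := Finset.card_pos.2 ⟨l, by simpa using hl⟩
    have := Nat.le_mul_of_pos_left (k - Fintype.card ι) this
    omega
  obtain ⟨D, hD, hDC⟩ := exists_mem_choiceSets_forall_mem (p := (· ∈ C)) (P := P) (s := univ)
    fun i _ => by
      by_contra! hi
      obtain ⟨l, -, hl⟩ := exists_class_subset_of_isBlocking hC hi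
      exact hnofull l hl
  have hDcard := card_of_mem_choiceSets hP hD
  rw [Finset.card_univ] at hDcard
  rwa [← Finset.eq_of_subset_of_card_le hDC (by omega)]

/-- No other class fits beside `P c`, so every class beaten by `c` is met. -/
theorem exists_block_subset_of_class_subset (hP : Pairwise (Disjoint on P))
    (hS : IsTournament S) (hbig : ∀ i j, i ≠ j → k < (P i).card + (P j).card)
    (hC : IsBlocking (tournamentFamily P S : Set _) C) (hCk : C.card ≤ k) {c : ι}
    (hc : P c ⊆ C) : ∃ B ∈ tournamentFamily P S, B ⊆ C := by
  have honly : ∀ l, P l ⊆ C → l = c := fun l hl => by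
    by_contra hlc
    have := Finset.card_le_card (Finset.union_subset hc hl)
    rw [Finset.card_union_of_disjoint (hP (Ne.symm hlc))] at this
    have := hbig c l (Ne.symm hlc)
    omega
  obtain ⟨D, hD, hDC⟩ := exists_mem_choiceSets_forall_mem (p := (· ∈ C)) (P := P) (s := S c)
    fun j hj => by
      by_contra! hj'
      obtain ⟨l, hl, hlC⟩ := exists_class_subset_of_isBlocking hC hj'
      exact hS.asymm c j hj (honly l hlC ▸ hl)
  exact ⟨P c ∪ D, mem_tournamentFamily.2 ⟨c, D, hD, rfl⟩, Finset.union_subset hc hDC⟩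

theorem transversals_union_tournamentFamily (hP : Pairwise (Disjoint on P))
    (hS : IsTournament S) (hk : ∀ i, (P i).card + (S i).card = k)
    (hbig : ∀ i j, i ≠ j → k < (P i).card + (P j).card) (ht : Fintype.card ι < k)
    (hne : ∀ i, (P i).Nonempty) [Nonempty ι] :
    transversals ((tournamentFamily P S : Set (Finset α)) ∪
      transversals (tournamentFamily P S : Set (Finset α))) = tournamentFamily P S := by
  rw [transversals_tournamentFamily hP hS hk ht hne]
  have hint := famIntersecting_tournamentFamily (S := S) hS hne
  refine transversals_eq (n := k) (fun B hB => ⟨?_, card_of_mem_tournamentFamily hP hS hk hB⟩)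
    ?_ fun C hC hCk => ?_
  · rintro B' (hB' | hB')
    · exact hint B' hB' B hB
    · obtain ⟨x, hxB, hxB'⟩ := exists_mem_of_mem_tournamentFamily_of_mem_choiceSets hB hB'
      exact ⟨x, hxB', hxB⟩
  · obtain ⟨D, hD⟩ := choiceSets_nonempty (P := P) (s := S (Classical.arbitrary ι)) fun i _ => hne i
    exact ⟨_, mem_tournamentFamily.2 ⟨_, D, hD, rfl⟩⟩
  -- `C` meets every choice set, so it contains a whole class
  obtain ⟨c, hc⟩ : ∃ c, P c ⊆ C := by
    by_contra! h
    obtain ⟨D, hD, hDC⟩ := exists_mem_choiceSets_forall_mem (p := (· ∉ C)) (P := P) (s := univ)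
      fun i _ => Finset.not_subset.1 (h i)
    obtain ⟨x, hxD, hxC⟩ := hC D (Or.inr hD)
    exact hDC x hxD hxC
  obtain ⟨B, hB, hBC⟩ := exists_block_subset_of_class_subset hP hS hbig
    (fun B hB => hC B (Or.inl hB)) hCk hc
  rwa [← Finset.eq_of_subset_of_card_le hBC (card_of_mem_tournamentFamily hP hS hk hB ▸ hCk)]

theorem cif_tournamentFamily (hP : Pairwise (Disjoint on P)) (hS : IsTournament S)
    (hk : ∀ i, (P i).card + (S i).card = k) (hbig : ∀ i j, i ≠ j → k < (P i).card + (P j).card)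
    (ht : Fintype.card ι < k) (hne : ∀ i, (P i).Nonempty) [Nonempty ι] :
    CIF (tournamentFamily P S : Set (Finset α)) k (Fintype.card ι) := by
  refine ⟨fun B hB => card_of_mem_tournamentFamily hP hS hk hB,
    famIntersecting_tournamentFamily hS hne, ?_, by omega,
    (transversals_union_tournamentFamily hP hS hk hbig ht hne).symm⟩
  obtain ⟨D, hD⟩ := transversals_nonempty (famIntersecting_tournamentFamily hS hne).hasBlocking
  rw [← hD.2]
  rw [transversals_tournamentFamily hP hS hk ht hne] at hD
  rw [card_of_mem_choiceSets hP hD, Finset.card_univ]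

theorem card_tournamentFamily (hP : Pairwise (Disjoint on P)) (hS : IsTournament S)
    (hP2 : ∀ i, 2 ≤ (P i).card) :
    (tournamentFamily P S).card = ∑ i, ∏ j ∈ S i, (P j).card := by
  rw [tournamentFamily, Finset.card_biUnion]
  · refine Finset.sum_congr rfl fun i _ => ?_
    rw [Finset.card_image_of_injOn, card_choiceSets hP]
    intro D hD D' hD' h
    have hdisj : ∀ {D}, D ∈ choiceSets P (S i) → Disjoint (P i) D :=
      disjoint_of_mem_choiceSets hP (hS.notMem_self i)
    rw [← Finset.union_sdiff_cancel_left (hdisj hD), ← Finset.union_sdiff_cancel_left (hdisj hD')]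
    exact congrArg (· \ P i) h
  -- blocks of different types differ: a block of type `j ≠ i` has at most one point in `P i`
  intro i _ j _ hij
  refine Finset.disjoint_left.2 fun B hBi hBj => ?_
  obtain ⟨D, hD, rfl⟩ := Finset.mem_image.1 hBi
  obtain ⟨D', hD', hB⟩ := Finset.mem_image.1 hBj
  obtain ⟨x, hx, y, hy, hxy⟩ := Finset.one_lt_card.1 (hP2 i)
  have hsub : ∀ z ∈ P i, z ∈ D' := fun z hz => by
    have : z ∈ P j ∪ D' := hB ▸ Finset.mem_union_left D hz
    exact (Finset.mem_union.1 this).resolve_left fun hzj => Finset.disjoint_left.1 (hP hij) hz hzj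
  exact hxy (eq_of_mem_choiceSets_of_mem_class hP hD' (hsub x hx) hx (hsub y hy) hy)

end TournamentFamily

/-- Consecutive intervals beyond `U`, with stride `∑ i, n i`. -/
theorem exists_pairwise_disjoint_card_eq_not_mem {t : ℕ} {U : Set ℕ} (hU : U.Finite)
    (n : Fin t → ℕ) : ∃ P : Fin t → Finset ℕ,
      Pairwise (Function.onFun Disjoint P) ∧ (∀ i, (P i).card = n i) ∧ ∀ i, ∀ x ∈ P i, x ∉ U := by
  obtain ⟨N, hN⟩ := hU.bddAbove
  have hn : ∀ i, n i ≤ ∑ j, n j := fun i =>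
    Finset.single_le_sum (fun _ _ => Nat.zero_le _) (Finset.mem_univ i)
  have hstride : ∀ i j : Fin t, (i : ℕ) < j → i * ∑ l, n l + n i ≤ j * ∑ l, n l := fun i j h => by
    have := Nat.mul_le_mul_right (∑ l, n l) (Nat.succ_le_of_lt h)
    rw [Nat.succ_mul] at this
    have := hn i
    omega
  refine ⟨fun i => Finset.Ico (N + 1 + i * ∑ l, n l) (N + 1 + i * ∑ l, n l + n i),
    fun i j hij => Finset.disjoint_left.2 fun x hxi hxj => ?_, fun i => by simp,
    fun i x hx hxU => ?_⟩
  · simp only [Finset.mem_Ico] at hxi hxj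
    rcases lt_or_gt_of_ne (Fin.val_ne_of_ne hij) with h | h
    · have := hstride i j h
      omega
    · have := hstride j i h
      omega
  · have := hN hxU
    simp only [Finset.mem_Ico] at hx
    omega

theorem le_M_of_isTournament {t k : ℕ} [NeZero t] {S : Fin t → Finset (Fin t)}
    (hS : IsTournament S) (htk : t < k) (h2 : ∀ i, (S i).card + 2 ≤ k)
    (hbig : ∀ i j, i ≠ j → k < (k - (S i).card) + (k - (S j).card)) :
    ∑ i, ∏ j ∈ S i, (k - (S j).card) + (∏ j, (k - (S j).card)) * M (k - t) ≤ M k := by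
  obtain ⟨A, hA, hAcard⟩ := exists_mif_ncard_eq_M (show 1 ≤ k - t by omega)
  obtain ⟨P, hP, hPcard, hPA⟩ := exists_pairwise_disjoint_card_eq_not_mem
    (hA.finite.biUnion fun B _ => B.finite_toSet) fun i => k - (S i).card
  have hk : ∀ i, (P i).card + (S i).card = k := fun i => by
    have := h2 i
    rw [hPcard]
    omega
  have hP2 : ∀ i, 2 ≤ (P i).card := fun i => by
    have := h2 i
    rw [hPcard]
    omega
  have hne : ∀ i, (P i).Nonempty := fun i => Finset.card_pos.1 (by have := hP2 i; omega)
  have hbig' : ∀ i j, i ≠ j → k < (P i).card + (P j).card := fun i j hij => by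
    rw [hPcard, hPcard]
    exact hbig i j hij
  have htk' : Fintype.card (Fin t) < k := by rwa [Fintype.card_fin]
  have hF := cif_tournamentFamily hP hS hk hbig' htk' hne
  rw [Fintype.card_fin] at hF
  have hdisj : Disjoint (pts (tournamentFamily P S : Set (Finset ℕ))) (pts A) := by
    refine Set.disjoint_left.2 fun x hx => ?_
    obtain ⟨B, hB, hxB⟩ := mem_pts.1 hx
    obtain ⟨i, hxi⟩ := exists_mem_class_of_mem_tournamentFamily hB hxB
    exact hPA i x hxi
  calc _ = (tournamentFamily P S).card + (choiceSets P univ).card * A.ncard := by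
        rw [card_tournamentFamily hP hS hP2, card_choiceSets hP, hAcard]
        simp only [hPcard]
    _ = _ := by
        rw [hF.ncard_union_star hA hdisj, transversals_tournamentFamily hP hS hk htk' hne,
          Set.ncard_coe_finset, Set.ncard_coe_finset]
    _ ≤ M k := (hF.mif_union_star hA hdisj).ncard_le_M

theorem add_mod_eq_iff {t i j d : ℕ} (hi : i < t) (hj : j < t) (hd : d ≤ t) :
    (i + d) % t = j ↔ i + d = j ∨ i + d = j + t := by
  by_cases h : i + d < t
  · rw [Nat.mod_eq_of_lt h]
    omega
  · rw [Nat.mod_eq_sub_mod (by omega), Nat.mod_eq_of_lt (by omega)]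
    omega

section Circulant

variable {t : ℕ} [NeZero t] {δ : Fin t → ℕ}

variable (t) in
/-- The circulant tournament on `ℤ/t` in which `i` beats `i + 1, …, i + δ i`. -/
def circulant (δ : Fin t → ℕ) (i : Fin t) : Finset (Fin t) :=
  (Finset.Icc 1 (δ i)).image fun d => ⟨((i : ℕ) + d) % t, Nat.mod_lt _ (NeZero.pos t)⟩

theorem mem_circulant {i j : Fin t} (hδ : δ i < t) :
    j ∈ circulant t δ i ↔ ∃ d, 1 ≤ d ∧ d ≤ δ i ∧ ((i : ℕ) + d = j ∨ (i : ℕ) + d = j + t) := by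
  simp only [circulant, Finset.mem_image, Finset.mem_Icc, Fin.ext_iff]
  refine exists_congr fun d =>
    ⟨fun ⟨⟨h1, h2⟩, h⟩ => ⟨h1, h2, ?_⟩, fun ⟨h1, h2, h⟩ => ⟨⟨h1, h2⟩, ?_⟩⟩
  · exact (add_mod_eq_iff i.isLt j.isLt (by omega)).1 h
  · exact (add_mod_eq_iff i.isLt j.isLt (by omega)).2 h

theorem card_circulant (hδ : ∀ i, δ i < t) (i : Fin t) : (circulant t δ i).card = δ i := by
  rw [circulant, Finset.card_image_of_injOn, Nat.card_Icc, Nat.add_sub_cancel]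
  intro d hd d' hd' h
  simp only [Finset.coe_Icc, Set.mem_Icc, Fin.mk.injEq] at hd hd' h
  have := hδ i
  have h₁ := (add_mod_eq_iff (d := d) i.isLt (Nat.mod_lt _ (NeZero.pos t)) (by omega)).1 rfl
  have h₂ := (add_mod_eq_iff (d := d') i.isLt (Nat.mod_lt _ (NeZero.pos t)) (by omega)).1 h.symm
  omega

theorem isTournament_circulant (hδ : ∀ i, δ i < t)
    (h : ∀ i j : Fin t, ∀ d, 0 < d → d < t → ((i : ℕ) + d = j ∨ (i : ℕ) + d = j + t) →
      (d ≤ δ i ↔ ¬ t - d ≤ δ j)) : IsTournament (circulant t δ) := by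
  constructor
  · intro i j hj hi
    obtain ⟨d, hd1, hd2, hd⟩ := (mem_circulant (hδ i)).1 hj
    obtain ⟨d', hd1', hd2', hd'⟩ := (mem_circulant (hδ j)).1 hi
    have := hδ i
    have := hδ j
    have hdd' : t - d = d' := by omega
    exact (h i j d (by omega) (by omega) hd).1 hd2 (hdd' ▸ hd2')
  · intro i j hij
    have hij' := Fin.val_ne_of_ne hij
    have := i.isLt
    have := j.isLt
    obtain ⟨d, hd0, hdt, hd⟩ : ∃ d, 0 < d ∧ d < t ∧ ((i : ℕ) + d = j ∨ (i : ℕ) + d = j + t) := by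
      rcases Nat.lt_or_gt_of_ne hij' with hlt | hgt
      · exact ⟨j - i, by omega, by omega, by omega⟩
      · exact ⟨j + t - i, by omega, by omega, by omega⟩
    by_cases hdi : d ≤ δ i
    · exact Or.inl ((mem_circulant (hδ i)).2 ⟨d, hd0, hdi, hd⟩)
    · have hdj : t - d ≤ δ j := not_not.1 (mt (h i j d hd0 hdt hd).2 hdi)
      exact Or.inr ((mem_circulant (hδ j)).2 ⟨t - d, by omega, hdj, by omega⟩)

end Circulant

theorem le_M_odd {k r : ℕ} (hr : 1 ≤ r) (hk : 2 * r ≤ k) :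
    (2 * r - 1) * (k - r + 1) ^ (r - 1) +
      (k - r + 1) ^ (2 * r - 1) * M (k - (2 * r - 1)) ≤ M k := by
  have : NeZero (2 * r - 1) := ⟨by omega⟩
  have hδ : ∀ i : Fin (2 * r - 1), r - 1 < 2 * r - 1 := fun _ => by omega
  have hS := isTournament_circulant hδ fun i j d _ _ _ => by omega
  have hcard := card_circulant hδ
  have h := le_M_of_isTournament (k := k) hS (by omega) (fun i => by rw [hcard]; omega)
    (fun i j _ => by rw [hcard, hcard]; omega)
  simp only [hcard, Finset.prod_const, Finset.sum_const, Finset.card_univ, Fintype.card_fin,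
    smul_eq_mul, show k - (r - 1) = k - r + 1 by omega] at h
  exact h

theorem le_M_even {k r : ℕ} (hr : 1 ≤ r) (hk : 2 * r + 1 ≤ k) :
    2 * r * (k - r) ^ (r - 1) + (k - r) ^ r * (k - r + 1) ^ r * M (k - 2 * r) ≤ M k := by
  have : NeZero (2 * r) := ⟨by omega⟩
  set δ : Fin (2 * r) → ℕ := fun i => if (i : ℕ) < r then r else r - 1
  have hδ : ∀ i, r - 1 ≤ δ i ∧ δ i ≤ r := fun i => by
    simp only [δ]
    split_ifs <;> omega
  have hδt : ∀ i, δ i < 2 * r := fun i => by have := hδ i; omega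
  have hS := isTournament_circulant hδt fun i j d _ _ _ => by simp only [δ]; split_ifs <;> omega
  have hcard := card_circulant hδt
  have h := le_M_of_isTournament (k := k) hS (by omega)
    (fun i => by rw [hcard]; have := hδ i; omega)
    (fun i j _ => by rw [hcard, hcard]; have := hδ i; have := hδ j; omega)
  simp only [hcard] at h
  refine le_trans (add_le_add ?_ (le_of_eq ?_)) h
  · calc 2 * r * (k - r) ^ (r - 1) = ∑ _i : Fin (2 * r), (k - r) ^ (r - 1) := by simp
      _ ≤ ∑ i, (k - r) ^ (circulant (2 * r) δ i).card :=
        Finset.sum_le_sum fun i _ => Nat.pow_le_pow_right (by omega) (hcard i ▸ (hδ i).1)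
      _ ≤ _ := Finset.sum_le_sum fun i _ =>
        Finset.pow_card_le_prod _ _ _ fun j _ => by have := hδ j; omega
  · have hlow : (univ.filter fun j : Fin (2 * r) => (j : ℕ) < r).card = r := by
      rw [Fin.card_filter_val_lt]
      omega
    have hhigh := Finset.card_filter_add_card_filter_not (s := (univ : Finset (Fin (2 * r))))
      fun j => (j : ℕ) < r
    rw [hlow, Finset.card_univ, Fintype.card_fin] at hhigh
    simp only [δ, apply_ite (k - ·), Finset.prod_ite, Finset.prod_const, hlow,
      show k - (r - 1) = k - r + 1 by omega]
    rw [show (univ.filter fun j : Fin (2 * r) => ¬ (j : ℕ) < r).card = r by omega]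

theorem stmt_16 (k t r : ℕ) (hk : t + 1 ≤ k) :
    (1 ≤ r → t = 2 * r - 1 →
      (2 * r - 1) * (k - r + 1) ^ (r - 1) +
        (k - r + 1) ^ (2 * r - 1) * M (k - (2 * r - 1)) ≤ M k) ∧
    (1 ≤ r → t = 2 * r →
      2 * r * (k - r) ^ (r - 1) +
        (k - r) ^ r * (k - r + 1) ^ r * M (k - 2 * r) ≤ M k) :=
  ⟨fun hr ht => le_M_odd hr (by omega), fun hr ht => le_M_even hr (by omega)⟩
end
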